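/- arXiv:2108.00823 — 2 statements merged into one kernel-verified Lean document; each statement's English description precedes it below -/
import Mathlib

section
/- Let G be a finite group and H a normal subgroup of G with exp(H) = exp(G). Then η(G) ≥ η(H) + d(G/H). -/
/-- A multiset `S` over a group is a *product-one sequence* if its terms can be
ordered so that their product is the identity. -/
def IsProductOne {G : Type*} [Group G] (S : Multiset G) : Prop :=
  ∃ l : List G, (l : Multiset G) = S ∧ l.prod = 1

/-- A multiset is *product-one free* if no nonempty sub-multiset is product-one. -/
def ProductOneFree {G : Type*} [Group G] (S : Multiset G) : Prop :=
  ∀ T : Multiset G, T ≤ S → T ≠ 0 → ¬ IsProductOne T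

/-- The small Davenport constant `d(G)`. -/
noncomputable def smallDavenport (G : Type*) [Group G] : ℕ :=
  sSup {k : ℕ | ∃ S : Multiset G, Multiset.card S = k ∧ ProductOneFree S}

/-- The `η`-constant of `G`. -/
noncomputable def etaConst (G : Type*) [Group G] : ℕ :=
  sInf {l : ℕ | ∀ S : Multiset G, l ≤ Multiset.card S →
    ∃ T, T ≤ S ∧ 1 ≤ Multiset.card T ∧ Multiset.card T ≤ Monoid.exponent G ∧ IsProductOne T}
/-!
Let `S` be a sequence over `H` of length `η(H) - 1` with no short product-one subsequence and
let `T` be a product-one free sequence over `G/H`, lifted to `G`. In a product-one subsequence of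
`S T`, the terms coming from `S` map to `1` in `G/H`; dropping them leaves a product-one
subsequence of `T`, so no term of `T` occurs. What remains is a product-one subsequence of `S`,
which cannot be short because `exp(H) = exp(G)`. Hence `η(G) > |S T| = η(H) - 1 + |T|`.
-/

theorem Multiset.exists_lt_count_of_mul_lt_card {α : Type*} [Finite α] [DecidableEq α] {n : ℕ}
    {S : Multiset α} (h : Nat.card α * n < card S) : ∃ a, n < S.count a := by
  have := Fintype.ofFinite α
  by_contra! hle
  have hcard : card S ≤ Nat.card α * n :=
    calc card S = ∑ a ∈ S.toFinset, S.count a := (toFinset_sum_count_eq S).symm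
      _ ≤ S.toFinset.card * n := Finset.sum_le_card_nsmul _ _ _ fun a _ => hle a
      _ ≤ Nat.card α * n := by
        rw [Nat.card_eq_fintype_card]
        exact Nat.mul_le_mul_right _ (Finset.card_le_univ _)
  omega

section

open Multiset

variable {G : Type*} [Group G]

def HasShortProductOne (n : ℕ) (S : Multiset G) : Prop :=
  ∃ T, T ≤ S ∧ 1 ≤ card T ∧ card T ≤ n ∧ IsProductOne T

theorem not_hasShortProductOne_zero {n : ℕ} : ¬ HasShortProductOne n (0 : Multiset G) :=
  fun ⟨T, hT, hT1, _⟩ => by simp [le_zero.1 hT] at hT1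

namespace IsProductOne

theorem map {Q : Type*} [Group Q] (φ : G →* Q) {S : Multiset G} (hS : IsProductOne S) :
    IsProductOne (S.map φ) := by
  obtain ⟨l, rfl, hl⟩ := hS
  exact ⟨l.map φ, rfl, by rw [List.prod_hom, hl, map_one]⟩

theorem filter_ne_one [DecidableEq G] {S : Multiset G} (hS : IsProductOne S) :
    IsProductOne (S.filter (· ≠ 1)) := by
  obtain ⟨l, rfl, hl⟩ := hS
  have hfilter : l.filter (· ≠ 1) = l.filter (· != 1) :=
    List.filter_congr fun _ _ => Bool.eq_iff_iff.2 (by simp)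
  exact ⟨l.filter (· ≠ 1), by simp, hfilter ▸ (List.prod_filter_bne_one l).trans hl⟩

theorem of_map_subtype {H : Subgroup G} {S : Multiset H}
    (hS : IsProductOne (S.map ((↑) : H → G))) : IsProductOne S := by
  obtain ⟨l, hlS, hl⟩ := hS
  lift l to List H using fun x hx => by
    obtain ⟨y, -, rfl⟩ := mem_map.1 (hlS ▸ hx : x ∈ S.map ((↑) : H → G))
    exact y.2
  refine ⟨l, map_injective Subtype.val_injective (by simpa using hlS), ?_⟩
  exact Subtype.val_injective (by simpa [SubmonoidClass.coe_list_prod] using hl)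

end IsProductOne

theorem productOneFree_zero : ProductOneFree (0 : Multiset G) :=
  fun _ hT hT0 => absurd (le_zero.1 hT) hT0

theorem ProductOneFree.one_notMem {S : Multiset G} (hS : ProductOneFree S) : 1 ∉ S :=
  fun h => hS {1} (singleton_le.2 h) (singleton_ne_zero 1) ⟨[1], rfl, List.prod_singleton⟩

theorem IsProductOne.le_of_le_add {Q : Type*} [Group Q] (φ : G →* Q) {A B U : Multiset G}
    (hA : ∀ a ∈ A, φ a = 1) (hB : ProductOneFree (B.map φ)) (hU : IsProductOne U)
    (hUAB : U ≤ A + B) : U ≤ A := by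
  classical
  have hUA : U - B ≤ A := tsub_le_iff_right.2 hUAB
  have hB1 : ∀ b ∈ B, φ b ≠ 1 := fun b hb h => hB.one_notMem (h ▸ mem_map_of_mem φ hb)
  have hsplit : (U.map φ).filter (· ≠ 1) = (U ∩ B).map φ := by
    conv_lhs => rw [← sub_add_inter U B]
    rw [Multiset.map_add, filter_add, filter_eq_nil.2, filter_eq_self.2, zero_add]
    · rintro _ hx
      obtain ⟨b, hb, rfl⟩ := mem_map.1 hx
      exact hB1 b (mem_of_le inter_le_right hb)
    · rintro _ hx
      obtain ⟨a, ha, rfl⟩ := mem_map.1 hx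
      exact not_not.2 (hA a (mem_of_le hUA ha))
  have hUB : U ∩ B = 0 := by
    by_contra hne
    refine hB _ (map_le_map inter_le_right) (by simpa using hne) ?_
    exact hsplit ▸ (hU.map φ).filter_ne_one
  calc U = U - B + U ∩ B := (sub_add_inter U B).symm
    _ ≤ A := by rwa [hUB, add_zero]

theorem not_hasShortProductOne_map_subtype_add {H : Subgroup G} [H.Normal] {n : ℕ}
    {S : Multiset H} {T : Multiset G} (hS : ¬ HasShortProductOne n S)
    (hT : ProductOneFree (T.map (QuotientGroup.mk' H))) :
    ¬ HasShortProductOne n (S.map (↑) + T) := by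
  rintro ⟨U, hU, hU1, hUn, hprod⟩
  have hUS := hprod.le_of_le_add _ (by simpa using fun a ha _ => ha) hT hU
  lift U to Multiset H using fun x hx => by
    obtain ⟨y, -, rfl⟩ := mem_map.1 (mem_of_le hUS hx)
    exact y.2
  exact hS ⟨U, (map_le_map_iff Subtype.val_injective).1 hUS, by simpa using hU1,
    by simpa using hUn, hprod.of_map_subtype⟩

variable (G) in
theorem exists_etaConst_sub_one_le_card_not_hasShortProductOne :
    ∃ S : Multiset G, etaConst G - 1 ≤ card S ∧ ¬ HasShortProductOne (Monoid.exponent G) S := by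
  rcases Nat.eq_zero_or_pos (etaConst G) with h | h
  · exact ⟨0, by simp [h], not_hasShortProductOne_zero⟩
  · obtain ⟨S, hS, hSshort⟩ := not_forall₂.1 (Nat.notMem_of_lt_sInf (Nat.sub_lt h one_pos))
    exact ⟨S, hS, hSshort⟩

variable [Finite G]

theorem hasShortProductOne_of_exponent_le_count [DecidableEq G] {S : Multiset G} {g : G}
    (h : Monoid.exponent G ≤ S.count g) : HasShortProductOne (Monoid.exponent G) S := by
  have hg := Monoid.orderOf_le_exponent .of_finite g
  exact ⟨replicate (orderOf g) g, le_count_iff_replicate_le.1 (hg.trans h),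
    by rw [card_replicate]; exact orderOf_pos g, by simpa using hg,
    ⟨List.replicate (orderOf g) g, rfl, by simp [pow_orderOf_eq_one]⟩⟩

theorem hasShortProductOne_of_etaConst_le {S : Multiset G} (h : etaConst G ≤ card S) :
    HasShortProductOne (Monoid.exponent G) S := by
  refine Nat.sInf_mem (s := {l | ∀ S : Multiset G, l ≤ card S →
    HasShortProductOne (Monoid.exponent G) S}) ?_ S h
  classical
  refine ⟨Nat.card G * (Monoid.exponent G - 1) + 1, fun S hS => ?_⟩
  obtain ⟨g, hg⟩ := exists_lt_count_of_mul_lt_card hS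
  exact hasShortProductOne_of_exponent_le_count (g := g) (by omega)

theorem etaConst_add_card_le_of_productOneFree (H : Subgroup G) [H.Normal]
    (hexp : Monoid.exponent H = Monoid.exponent G) {T : Multiset (G ⧸ H)}
    (hT : ProductOneFree T) : etaConst H + card T ≤ etaConst G := by
  obtain ⟨T, rfl⟩ := map_surjective_of_surjective (QuotientGroup.mk'_surjective H) T
  obtain ⟨S, hS, hSshort⟩ := exists_etaConst_sub_one_le_card_not_hasShortProductOne H
  have hW := not_hasShortProductOne_map_subtype_add (hexp ▸ hSshort) hT
  have hWcard : card (S.map (↑) + T) < etaConst G :=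
    lt_of_not_ge fun h => hW (hasShortProductOne_of_etaConst_le h)
  rw [card_add, card_map] at hWcard
  rw [card_map]
  omega

end

theorem stmt_1 (G : Type*) [Group G] [Finite G] (H : Subgroup G) [H.Normal]
    (hexp : Monoid.exponent H = Monoid.exponent G) :
    etaConst H + smallDavenport (G ⧸ H) ≤ etaConst G := by
  have key : ∀ k ∈ {k | ∃ T : Multiset (G ⧸ H), Multiset.card T = k ∧ ProductOneFree T},
      etaConst H + k ≤ etaConst G := by
    rintro k ⟨T, rfl, hT⟩
    exact etaConst_add_card_le_of_productOneFree H hexp hT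
  exact key _ (Nat.sSup_mem ⟨0, 0, Multiset.card_zero, productOneFree_zero⟩
    ⟨etaConst G, fun k hk => le_of_add_le_right (key k hk)⟩)
end

section
/- Let m ≥ 2 and n ≥ 3 be integers with m dividing n. Then d(D_{2n} × C_m) ≥ m + n − 1, where D_{2n} is the dihedral group of order 2n and C_m is the cyclic group of order m. -/
/-! In `D_{2n} × C_m` take `x = (r 1, 0)`, `y = (s, 1)`, `z = (1, 1)`; the sequence
`x^(n-1) y z^(m-1)` of length `m + n - 1` is product-one free. The sign character of `D_{2n}`
counts reflections, so a product-one subsequence avoids `y`; its projection to `C_m` then shows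
that it avoids `z`, so it is a nonempty power `x^i` with `i < n = ord x`. The lengths whose supremum
is `d(G)` are bounded because no term of a product-one free sequence repeats `ord g` times. -/

section ProductOne

variable {G : Type*} [Group G]

lemma IsProductOne.prod_map_eq_one {H : Type*} [CommMonoid H] {S : Multiset G}
    (hS : IsProductOne S) (φ : G →* H) : (S.map φ).prod = 1 := by
  obtain ⟨l, rfl, hl⟩ := hS
  rw [Multiset.map_coe, Multiset.prod_coe, ← map_list_prod, hl, map_one]

lemma isProductOne_replicate_iff {k : ℕ} {g : G} :
    IsProductOne (Multiset.replicate k g) ↔ g ^ k = 1 := by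
  constructor
  · rintro ⟨l, hl, hprod⟩
    rw [← Multiset.coe_replicate, Multiset.coe_eq_coe, List.perm_replicate] at hl
    rwa [hl, List.prod_replicate] at hprod
  · exact fun h =>
      ⟨List.replicate k g, Multiset.coe_replicate k g, by rwa [List.prod_replicate]⟩

lemma ProductOneFree.count_lt_orderOf [Finite G] [DecidableEq G] {S : Multiset G}
    (hS : ProductOneFree S) (g : G) : S.count g < orderOf g := by
  by_contra! h
  exact hS _ (Multiset.le_count_iff_replicate_le.mp h)
    (ne_of_apply_ne Multiset.card (by simpa using (orderOf_pos g).ne'))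
    (isProductOne_replicate_iff.mpr (pow_orderOf_eq_one g))

lemma ProductOneFree.card_lt_sum_orderOf [Fintype G] [DecidableEq G] {S : Multiset G}
    (hS : ProductOneFree S) :
    Multiset.card S < ∑ g : G, orderOf g := by
  rw [← Multiset.sum_count_eq_card (s := Finset.univ) fun g _ => Finset.mem_univ g]
  exact Finset.sum_lt_sum_of_nonempty Finset.univ_nonempty fun g _ => hS.count_lt_orderOf g

lemma ProductOneFree.card_le_smallDavenport [Finite G] {S : Multiset G} (hS : ProductOneFree S) :
    Multiset.card S ≤ smallDavenport G := by
  classical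
  have := Fintype.ofFinite G
  refine le_csSup ⟨∑ g : G, orderOf g, ?_⟩ ⟨S, rfl, hS⟩
  rintro _ ⟨T, rfl, hT⟩
  exact hT.card_lt_sum_orderOf.le

end ProductOne

lemma Multiset.exists_eq_add_of_le_add {α : Type*} [DecidableEq α] {T A B : Multiset α}
    (h : T ≤ A + B) : ∃ A' ≤ A, ∃ B' ≤ B, T = A' + B' :=
  ⟨T ∩ A, Multiset.inter_le_right, T - A, Multiset.sub_le_iff_le_add.mpr (add_comm A B ▸ h),
    by rw [add_comm, Multiset.sub_add_inter]⟩

lemma Multiset.exists_eq_replicate_of_le_replicate_add_replicate_add_replicate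
    {α : Type*} [DecidableEq α] {T : Multiset α} {a b c : ℕ} {x y z : α}
    (h : T ≤ replicate a x + replicate b y + replicate c z) :
    ∃ i ≤ a, ∃ j ≤ b, ∃ k ≤ c, T = replicate i x + replicate j y + replicate k z := by
  obtain ⟨U, hU, Z, hZ, rfl⟩ := exists_eq_add_of_le_add h
  obtain ⟨X, hX, Y, hY, rfl⟩ := exists_eq_add_of_le_add hU
  obtain ⟨i, hi, rfl⟩ := le_replicate_iff.mp hX
  obtain ⟨j, hj, rfl⟩ := le_replicate_iff.mp hY
  obtain ⟨k, hk, rfl⟩ := le_replicate_iff.mp hZ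
  exact ⟨i, hi, j, hj, k, hk, rfl⟩

namespace DihedralGroup

def sign (n : ℕ) : DihedralGroup n →* Multiplicative (ZMod 2) where
  toFun
    | r _ => 1
    | sr _ => Multiplicative.ofAdd 1
  map_one' := rfl
  map_mul' := by
    rintro (a | a) (b | b) <;> simp only [r_mul_r, r_mul_sr, sr_mul_r, sr_mul_sr] <;> rfl

@[simp] lemma sign_r {n : ℕ} (i : ZMod n) : sign n (r i) = 1 := rfl

@[simp] lemma sign_sr {n : ℕ} (i : ZMod n) : sign n (sr i) = Multiplicative.ofAdd 1 := rfl

end DihedralGroup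

open DihedralGroup Multiset in
theorem productOneFree_dihedral_prod_cyclic (m n : ℕ) :
    ProductOneFree (replicate (n - 1) ((r 1, 1) : DihedralGroup n × Multiplicative (ZMod m)) +
      replicate 1 (sr 0, Multiplicative.ofAdd 1) +
      replicate (m - 1) (1, Multiplicative.ofAdd 1)) := by
  intro T hT hT0 hprod
  obtain ⟨i, hi, j, hj, k, hk, rfl⟩ :=
    exists_eq_replicate_of_le_replicate_add_replicate_add_replicate hT
  have hsign := hprod.prod_map_eq_one ((sign n).comp (MonoidHom.fst _ _))
  have hsnd := hprod.prod_map_eq_one (MonoidHom.snd _ _)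
  simp only [map_add, map_replicate, prod_add, prod_replicate, MonoidHom.coe_comp,
    MonoidHom.coe_fst, MonoidHom.coe_snd, Function.comp_apply, sign_r, sign_sr, map_one,
    one_pow, one_mul] at hsign hsnd
  obtain rfl : j = 0 := by
    interval_cases j
    · rfl
    · exact absurd hsign (by decide)
  obtain rfl : k = 0 := by
    rw [pow_zero, one_mul, ← ofAdd_nsmul, ofAdd_eq_one, nsmul_one,
      ZMod.natCast_eq_zero_iff] at hsnd
    by_contra hk0
    have := Nat.le_of_dvd (Nat.pos_of_ne_zero hk0) hsnd
    omega
  simp only [replicate_zero, add_zero, ne_eq, ← card_eq_zero, card_replicate] at hprod hT0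
  have hr : (r 1 : DihedralGroup n) ^ i = 1 :=
    congrArg Prod.fst (isProductOne_replicate_iff.mp hprod)
  exact pow_ne_one_of_lt_orderOf hT0 (by rw [orderOf_r_one]; omega) hr

theorem stmt_4_general (m n : ℕ) (hm : 2 ≤ m) (hn : 3 ≤ n) :
    m + n - 1 ≤ smallDavenport (DihedralGroup n × Multiplicative (ZMod m)) := by
  have : NeZero m := ⟨by omega⟩
  have : NeZero n := ⟨by omega⟩
  have h := (productOneFree_dihedral_prod_cyclic m n).card_le_smallDavenport
  simp only [Multiset.card_add, Multiset.card_replicate] at h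
  omega

theorem stmt_4 (m n : ℕ) (hm : 2 ≤ m) (hn : 3 ≤ n) (hdvd : m ∣ n) :
    m + n - 1 ≤ smallDavenport (DihedralGroup n × Multiplicative (ZMod m)) :=
  stmt_4_general m n hm hn
end
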